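/- Let f : V × V → ℝ≥0 satisfy the triangle inequality, R ⊆ V a nonempty set of refueling stations, F > 0 a fuel capacity, and for each j ∈ V define t(j) = min_{r∈R} f(j,r). If x(i,j) represents the fuel consumed upon arriving at j via edge (i,j) on a feasible route that must be able to reach some refueling station from j without exceeding capacity F, then the constraint x(i,j) ≤ F implied by capacity can be strengthened to x(i,j) ≤ F − t(j): any feasible value of x(i,j) satisfying 'x(i,j) + (fuel from j to the next refueling visit) ≤ F' must satisfy x(i,j) ≤ F − t(j). -/

import Mathlib

theorem le_sum_range_succ_of_triangle {V β : Type*} [AddCommMonoid β] [PartialOrder β]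
    [IsOrderedAddMonoid β] {f : V → V → β} (htri : ∀ i j k, f i k ≤ f i j + f j k)
    (w : ℕ → V) (n : ℕ) :
    f (w 0) (w (n + 1)) ≤ ∑ k ∈ Finset.range (n + 1), f (w k) (w (k + 1)) := by
  induction n with
  | zero => simp
  | succ n ih =>
    rw [Finset.sum_range_succ]
    exact (htri _ (w (n + 1)) _).trans (add_le_add_left ih _)

theorem stmt_11_general {V : Type*} (f : V → V → ℝ)
    (htri : ∀ i j k, f i k ≤ f i j + f j k)
    (R : Finset V) (hR : R.Nonempty) (F : ℝ) (j : V) (x : ℝ)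
    (w : ℕ → V) (m : ℕ) (hm : 1 ≤ m) (h0 : w 0 = j) (hend : w m ∈ R)
    (hcap : x + (∑ k ∈ Finset.range m, f (w k) (w (k + 1))) ≤ F) :
    x ≤ F - R.inf' hR (fun r => f j r) := by
  obtain ⟨n, rfl⟩ := Nat.exists_eq_add_of_le' hm
  have hstation : R.inf' hR (fun r => f j r) ≤ f j (w (n + 1)) := Finset.inf'_le _ hend
  have hpath := le_sum_range_succ_of_triangle htri w n
  rw [h0] at hpath
  linarith

theorem stmt_11 {V : Type*} [Fintype V] (f : V → V → ℝ)
    (hnn : ∀ i j, 0 ≤ f i j)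
    (htri : ∀ i j k, f i k ≤ f i j + f j k)
    (R : Finset V) (hR : R.Nonempty) (F : ℝ) (j : V) (x : ℝ)
    (w : ℕ → V) (m : ℕ) (hm : 1 ≤ m) (h0 : w 0 = j) (hend : w m ∈ R)
    (hcap : x + (∑ k ∈ Finset.range m, f (w k) (w (k + 1))) ≤ F) :
    x ≤ F - R.inf' hR (fun r => f j r) :=
  stmt_11_general f htri R hR F j x w m hm h0 hend hcap
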